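/- arXiv:1209.2379 — 3 statements merged into one kernel-verified Lean document; each statement's English description precedes it below -/
import Mathlib

section
/- (Corollary to the Boundary Vectors Criterion) Let A ⊆ ℝ^n be a finite set of constraint vectors, let t, u ∈ ℝ^n, and fix d > 0. If every boundary vector ω ∈ Ω_d(A) satisfies ω·(t − u) > 0, then there is no τ ∈ C(A) with τ·(u − t) > 0; that is, no admissible refinement of the current cone can give u greater weight than t. -/
/-!
Rescale a putative `τ ∈ C(A)` with `τ·(u − t) > 0` so that its coordinates sum to `d`. It then
lies in the compact convex slice `C̄(A) ∩ {∑ yₖ = d}`, which by Krein–Milman is contained in every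
closed convex set containing its extreme points, in particular in the half-space
`{y | y·(t − u) ≥ 0}`. Hence `τ·(t − u) ≥ 0`, a contradiction.
-/

open Matrix

/-- The open cone defined by positivity of all coordinates and of all the
constraints in `A`. -/
def openCone {n : ℕ} (A : Finset (Fin n → ℝ)) : Set (Fin n → ℝ) :=
  {y | (∀ k, y k > 0) ∧ ∀ a ∈ A, a ⬝ᵥ y > 0}

/-- The closed relaxation of the cone. -/
def closedCone {n : ℕ} (A : Finset (Fin n → ℝ)) : Set (Fin n → ℝ) :=
  {y | (∀ k, y k ≥ 0) ∧ ∀ a ∈ A, a ⬝ᵥ y ≥ 0}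

/-- The boundary vectors of the cone at level `d`: the extreme points of the
intersection of the closed cone with the hyperplane of coordinate-sum `d`. -/
def boundaryVectors {n : ℕ} (A : Finset (Fin n → ℝ)) (d : ℝ) : Set (Fin n → ℝ) :=
  Set.extremePoints ℝ (closedCone A ∩ {y | ∑ k, y k = d})

theorem IsCompact.subset_of_extremePoints_subset {E : Type*} [AddCommGroup E] [Module ℝ E]
    [TopologicalSpace E] [T2Space E] [IsTopologicalAddGroup E] [ContinuousSMul ℝ E]
    [LocallyConvexSpace ℝ E] {s C : Set E} (hs : IsCompact s) (hsconv : Convex ℝ s)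
    (hC : IsClosed C) (hCconv : Convex ℝ C) (h : Set.extremePoints ℝ s ⊆ C) : s ⊆ C := by
  rw [← closure_convexHull_extremePoints hs hsconv]
  exact closure_minimal (convexHull_min h hCconv) hC

lemma isLinearMap_dotProduct {ι R : Type*} [Fintype ι] [CommSemiring R] (a : ι → R) :
    IsLinearMap R (a ⬝ᵥ ·) :=
  ⟨dotProduct_add a, fun c y => dotProduct_smul c a y⟩

section Cone

variable {n : ℕ} (A : Finset (Fin n → ℝ))

lemma closedCone_eq_iInter :
    closedCone A = (⋂ k, {y | 0 ≤ y k}) ∩ ⋂ a ∈ A, {y | 0 ≤ a ⬝ᵥ y} := by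
  ext y
  simp [closedCone]

lemma convex_closedCone : Convex ℝ (closedCone A) := by
  rw [closedCone_eq_iInter]
  exact (convex_iInter fun k => convex_halfSpace_ge (LinearMap.proj k).isLinear 0).inter
    (convex_iInter₂ fun a _ => convex_halfSpace_ge (isLinearMap_dotProduct a) 0)

lemma isClosed_closedCone : IsClosed (closedCone A) := by
  rw [closedCone_eq_iInter]
  exact (isClosed_iInter fun k => isClosed_le continuous_const (continuous_apply k)).inter
    (isClosed_biInter fun a _ =>
      isClosed_le continuous_const (continuous_const.dotProduct continuous_id))

lemma smul_mem_closedCone {c : ℝ} (hc : 0 ≤ c) {y : Fin n → ℝ} (hy : y ∈ closedCone A) :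
    c • y ∈ closedCone A :=
  ⟨fun k => mul_nonneg hc (hy.1 k), fun a ha => by
    rw [dotProduct_smul]
    exact mul_nonneg hc (hy.2 a ha)⟩

lemma openCone_subset_closedCone : openCone A ⊆ closedCone A :=
  fun _ hy => ⟨fun k => (hy.1 k).le, fun a ha => (hy.2 a ha).le⟩

def coneSlice (d : ℝ) : Set (Fin n → ℝ) :=
  closedCone A ∩ {y | ∑ k, y k = d}

lemma convex_coneSlice (d : ℝ) : Convex ℝ (coneSlice A d) :=
  (convex_closedCone A).inter
    (by simpa only [one_dotProduct] using convex_hyperplane (isLinearMap_dotProduct 1) d)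

lemma isCompact_coneSlice (d : ℝ) : IsCompact (coneSlice A d) := by
  have hclosed : IsClosed (coneSlice A d) :=
    (isClosed_closedCone A).inter
      (isClosed_eq (continuous_finsetSum _ fun k _ => continuous_apply k) continuous_const)
  refine (isCompact_Icc (b := fun _ => d)).of_isClosed_subset hclosed
    fun y ⟨hy, hsum⟩ => ⟨hy.1, fun k => ?_⟩
  calc y k ≤ ∑ j, y j := Finset.single_le_sum (fun j _ => hy.1 j) (Finset.mem_univ k)
    _ = d := hsum

lemma exists_pos_smul_mem_coneSlice [Nonempty (Fin n)] {τ : Fin n → ℝ} (hτ : τ ∈ openCone A)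
    {d : ℝ} (hd : 0 < d) : ∃ c : ℝ, 0 < c ∧ c • τ ∈ coneSlice A d := by
  have hsum : 0 < ∑ k, τ k := Finset.sum_pos (fun k _ => hτ.1 k) Finset.univ_nonempty
  refine ⟨d / ∑ k, τ k, div_pos hd hsum,
    smul_mem_closedCone A (div_pos hd hsum).le (openCone_subset_closedCone A hτ), ?_⟩
  simp only [Set.mem_ofPred_eq, Pi.smul_apply, smul_eq_mul, ← Finset.mul_sum]
  exact div_mul_cancel₀ d hsum.ne'

end Cone

/-- **Corollary to the Boundary Vectors Criterion.** If every boundary vector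
`ω` satisfies `ω·(t - u) > 0`, then no ordering `τ` in the open cone gives `u`
more weight than `t`. -/
theorem boundary_vectors_corollary {n : ℕ} (A : Finset (Fin n → ℝ))
    (t u : Fin n → ℝ) (d : ℝ) (hd : d > 0)
    (h : ∀ ω ∈ boundaryVectors A d, ω ⬝ᵥ (t - u) > 0) :
    ¬ ∃ τ ∈ openCone A, τ ⬝ᵥ (u - t) > 0 := by
  rintro ⟨τ, hτ, hτut⟩
  cases isEmpty_or_nonempty (Fin n)
  · simp [dotProduct] at hτut
  obtain ⟨c, hc, hcτ⟩ := exists_pos_smul_mem_coneSlice A hτ hd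
  have hhalf : coneSlice A d ⊆ {y | 0 ≤ y ⬝ᵥ (t - u)} :=
    (isCompact_coneSlice A d).subset_of_extremePoints_subset (convex_coneSlice A d)
      (isClosed_le continuous_const (continuous_id.dotProduct continuous_const))
      (by simpa only [dotProduct_comm] using
        convex_halfSpace_ge (isLinearMap_dotProduct (t - u)) 0)
      fun ω hω => (h ω hω).le
  have hneg : τ ⬝ᵥ (t - u) = -(τ ⬝ᵥ (u - t)) := by
    rw [← dotProduct_neg, neg_sub]
  have := hhalf hcτ
  rw [Set.mem_ofPred_eq, smul_dotProduct, smul_eq_mul, hneg, mul_neg] at this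
  linarith [mul_pos hc hτut]
end

section
/- (Refining Criterion) Let g_1, …, g_ℓ be nonzero polynomials in K[x_1,…,x_n] and let t_k ∈ supp(g_k) for each k. For each k, let P_k = { u ∈ supp(g_k) : there exists a monomial order μ such that lt_μ(g_j) = t_j for all j = 1, …, k−1 and lt_μ(g_k) = u } (the compatible leading terms of g_k). Then for every monomial order σ, the following are equivalent: (i) for every k and every u ∈ supp(g_k) with u ≠ t_k, u ≺_σ t_k; (ii) for every k and every u ∈ P_k with u ≠ t_k, u ≺_σ t_k. In particular, lt_σ(g_k) = t_k for all k if and only if σ satisfies the restricted system (ii). -/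
open scoped MonomialOrder

/-- `t` is the leading exponent of `g` with respect to the monomial order `μ`:
it lies in the support of `g` and dominates every exponent in the support. -/
def IsLeadingExp {n : ℕ} {K : Type*} [Field K] (μ : MonomialOrder (Fin n))
    (g : MvPolynomial (Fin n) K) (t : Fin n →₀ ℕ) : Prop :=
  t ∈ g.support ∧ ∀ u ∈ g.support, u ≼[μ] t

/-!
Since `P k ⊆ supp (g k)`, only the converse needs an argument. If `σ` satisfies the restricted
system, induct on `k`: once `σ` selects `t j` for all `j < k`, `σ` itself is one of the orders in the
definition of `P k`, so its leading exponent of `g k` lies in `P k`; were it different from `t k` it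
would be `≺ t k`, which is impossible for the leading exponent, hence it is `t k`.
-/

universe u v w

namespace MonomialOrder

variable {σ : Type u}

/-- A copy of `m` whose synonym type lives in an arbitrary universe `v`; the sets `P k` quantify
over monomial orders with synonym type in one fixed universe. -/
noncomputable def ulift (m : MonomialOrder.{u, w} σ) : MonomialOrder.{u, max u v} σ :=
  let f : ULift.{v} (σ →₀ ℕ) → m.syn := fun x => m.toSyn x.down
  let lo : LinearOrder (ULift.{v} (σ →₀ ℕ)) :=
    LinearOrder.lift' f (m.toSyn.injective.comp ULift.down_injective)
  { syn := ULift.{v} (σ →₀ ℕ)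
    linearOrderSyn := lo
    isOrderedAddMonoid_syn := @Function.Injective.isOrderedAddMonoid _ _ _ _ _ _ lo.toPreorder f
      (fun x y => by simp only [f, ULift.add_down, map_add]) Iff.rfl
    toSyn := AddEquiv.ulift.symm
    toSyn_monotone := fun _ _ h => m.toSyn_monotone h
    wellFoundedLT_syn := ⟨InvImage.wf f wellFounded_lt⟩ }

end MonomialOrder

section LeadingExp

variable {n : ℕ} {K : Type*} [Field K]

theorem isLeadingExp_ulift_iff (μ : MonomialOrder (Fin n)) (g : MvPolynomial (Fin n) K)
    (t : Fin n →₀ ℕ) : IsLeadingExp μ.ulift.{0, v} g t ↔ IsLeadingExp μ g t :=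
  Iff.rfl

theorem isLeadingExp_iff_forall_lt {μ : MonomialOrder (Fin n)} {g : MvPolynomial (Fin n) K}
    {t : Fin n →₀ ℕ} (ht : t ∈ g.support) :
    IsLeadingExp μ g t ↔ ∀ u ∈ g.support, u ≠ t → u ≺[μ] t := by
  refine ⟨fun h u hu hne => (h.2 u hu).lt_of_ne (μ.toSyn.injective.ne hne), fun h => ⟨ht, ?_⟩⟩
  intro u hu
  obtain rfl | hne := eq_or_ne u t
  · exact le_rfl
  · exact (h u hu hne).le

theorem isLeadingExp_iff_eq_degree {μ : MonomialOrder (Fin n)} {g : MvPolynomial (Fin n) K}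
    {t : Fin n →₀ ℕ} (hg : g ≠ 0) : IsLeadingExp μ g t ↔ t = μ.degree g := by
  constructor
  · rintro ⟨ht, hmax⟩
    exact μ.toSyn.injective ((μ.le_degree ht).antisymm' (hmax _ (μ.degree_mem_support hg))).symm
  · rintro rfl
    exact ⟨μ.degree_mem_support hg, fun u hu => μ.le_degree hu⟩

end LeadingExp

section CompatibleLeadingExps

variable {n : ℕ} {K : Type*} [Field K] {ι : Type*} [Preorder ι]

/-- The set `P k` of compatible leading exponents of `g k`. -/
def compatibleLeadingExps (g : ι → MvPolynomial (Fin n) K) (t : ι → (Fin n →₀ ℕ)) (k : ι) :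
    Set (Fin n →₀ ℕ) :=
  {u | u ∈ (g k).support ∧ ∃ μ : MonomialOrder.{0, v} (Fin n),
    (∀ j, j < k → IsLeadingExp μ (g j) (t j)) ∧ IsLeadingExp μ (g k) u}

theorem degree_mem_compatibleLeadingExps {g : ι → MvPolynomial (Fin n) K}
    {t : ι → (Fin n →₀ ℕ)} {σ : MonomialOrder (Fin n)} {k : ι} (hg : g k ≠ 0)
    (hprev : ∀ j < k, IsLeadingExp σ (g j) (t j)) :
    σ.degree (g k) ∈ compatibleLeadingExps.{v} g t k :=
  ⟨σ.degree_mem_support hg, σ.ulift, fun j hj => (isLeadingExp_ulift_iff σ _ _).2 (hprev j hj),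
    (isLeadingExp_ulift_iff σ _ _).2 ((isLeadingExp_iff_eq_degree hg).2 rfl)⟩

theorem forall_isLeadingExp_of_compatible [WellFoundedLT ι] (g : ι → MvPolynomial (Fin n) K)
    (hg : ∀ k, g k ≠ 0) (t : ι → (Fin n →₀ ℕ)) (ht : ∀ k, t k ∈ (g k).support)
    (σ : MonomialOrder (Fin n))
    (hres : ∀ k, ∀ u ∈ compatibleLeadingExps.{v} g t k, u ≠ t k → u ≺[σ] t k) :
    ∀ k, IsLeadingExp σ (g k) (t k) := by
  intro k
  induction k using WellFoundedLT.induction with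
  | _ k ih =>
    rw [isLeadingExp_iff_eq_degree (hg k)]
    by_contra hne
    exact (σ.le_degree (ht k)).not_gt
      (hres k _ (degree_mem_compatibleLeadingExps (hg k) ih) (Ne.symm hne))

end CompatibleLeadingExps

/-- **Refining Criterion.** Given nonzero polynomials `g 0, …, g (ℓ-1)` and a
choice `t k ∈ supp (g k)`, let `P k` be the set of compatible leading terms of
`g k` (those `u` in the support of `g k` that are the leading exponent of `g k`
for some monomial order `μ` selecting `t j` as leading exponent of `g j` for
all `j < k`). Then for any monomial order `σ`, the full system of inequalities
`u ≺ t k` for all `u ∈ supp (g k) \ {t k}` is equivalent to the restricted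
system ranging only over `u ∈ P k \ {t k}`; in particular `σ` selects all the
`t k` as leading exponents if and only if it satisfies the restricted system. -/
theorem refining_criterion {n ℓ : ℕ} {K : Type*} [Field K]
    (g : Fin ℓ → MvPolynomial (Fin n) K) (hg : ∀ k, g k ≠ 0)
    (t : Fin ℓ → (Fin n →₀ ℕ)) (ht : ∀ k, t k ∈ (g k).support)
    (P : Fin ℓ → Set (Fin n →₀ ℕ))
    (hP : ∀ k, P k = {u | u ∈ (g k).support ∧
      ∃ μ : MonomialOrder (Fin n),
        (∀ j, j < k → IsLeadingExp μ (g j) (t j)) ∧ IsLeadingExp μ (g k) u})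
    (σ : MonomialOrder (Fin n)) :
    ((∀ k, ∀ u ∈ (g k).support, u ≠ t k → u ≺[σ] t k) ↔
      (∀ k, ∀ u ∈ P k, u ≠ t k → u ≺[σ] t k)) ∧
    ((∀ k, IsLeadingExp σ (g k) (t k)) ↔
      (∀ k, ∀ u ∈ P k, u ≠ t k → u ≺[σ] t k)) := by
  obtain rfl : P = compatibleLeadingExps g t := funext hP
  have hfull : (∀ k, IsLeadingExp σ (g k) (t k)) ↔
      ∀ k, ∀ u ∈ (g k).support, u ≠ t k → u ≺[σ] t k :=
    forall_congr' fun k => isLeadingExp_iff_forall_lt (ht k)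
  have hrestricted : (∀ k, IsLeadingExp σ (g k) (t k)) ↔
      ∀ k, ∀ u ∈ compatibleLeadingExps g t k, u ≠ t k → u ≺[σ] t k :=
    ⟨fun h k u hu => hfull.1 h k u hu.1, forall_isLeadingExp_of_compatible g hg t ht σ⟩
  exact ⟨hfull.symm.trans hrestricted, hrestricted⟩
end

section
/- Every monomial order can be represented on a finite set of terms by a single weight vector: for any monomial order ⪯ on ℕ^n and any finite set S of exponent vectors, there exists a weight vector w ∈ ℕ^n with every coordinate positive such that for all u, t ∈ S, u ≺ t implies w·u < w·t; consequently, for all distinct u, t ∈ S, u ≺ t if and only if w·u < w·t. -/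
/-!
For the pairs `u ≺ t` in `S` consider the vectors `t - u`. By Gordan's theorem, with the
coordinate vectors adjoined so that the weight comes out positive, a weight `w > 0` with
`w · (t - u) > 0` for all these pairs exists unless some nontrivial nonnegative combination of
them is componentwise `≤ 0`. After clearing denominators, such a combination reads
`∑ aᵢ tᵢ ≤ ∑ aᵢ uᵢ` in `ℕⁿ`, whereas adding up the `aᵢ uᵢ ≺ aᵢ tᵢ` gives `∑ aᵢ uᵢ ≺ ∑ aᵢ tᵢ`,
and a monomial order refines the componentwise order. A rational weight is then scaled to an
integral one.

Gordan's theorem over an ordered field is proved by Fourier–Motzkin elimination of the first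
coordinate: the reduced family consists of the vectors with vanishing first coordinate and, for
each pair with first coordinates of opposite signs, the positive combination of the two in which
that coordinate cancels. A weight for the reduced family extends to one for the original family,
since the constraints it leaves on the first coordinate of the weight are compatible bounds.
-/

open scoped MonomialOrder

open Finset Matrix

section Gordan

variable {K ι : Type*} [Field K] [LinearOrder K]

variable (K) in
def NoNonposCombination {E : Type*} [AddCommMonoid E] [Module K E] [LE E] [Fintype ι]
    (v : ι → E) : Prop :=
  ∀ a : ι → K, 0 ≤ a → ∑ i, a i • v i ≤ 0 → a = 0

namespace NoNonposCombination

variable [Fintype ι]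

theorem sum_smul [IsStrictOrderedRing K] {E ι' : Type*} [AddCommMonoid E] [Module K E] [LE E]
    [Fintype ι'] {v : ι → E} (hv : NoNonposCombination K v) {c : ι' → ι → K}
    (hc : ∀ j, 0 ≤ c j) (hc₀ : ∀ j, c j ≠ 0) :
    NoNonposCombination K fun j ↦ ∑ i, c j i • v i := by
  intro a ha hle
  have hsum : ∑ j, a j • ∑ i, c j i • v i = ∑ i, (∑ j, a j * c j i) • v i := by
    simp only [Finset.smul_sum, Finset.sum_smul, mul_smul]
    exact Finset.sum_comm
  have hzero := congrFun (hv _ (fun i ↦ sum_nonneg fun j _ ↦ mul_nonneg (ha j) (hc j i))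
    (hsum ▸ hle))
  funext j
  by_contra hj
  obtain ⟨i, hi⟩ := Function.ne_iff.1 (hc₀ j)
  have hpos : 0 < a j * c j i := mul_pos ((ha j).lt_of_ne' hj) ((hc j i).lt_of_ne' hi)
  have := (sum_eq_zero_iff_of_nonneg fun j _ ↦ mul_nonneg (ha j) (hc j i)).1 (hzero i) j
    (mem_univ j)
  exact hpos.ne' this

theorem tail {n : ℕ} {v : ι → Fin (n + 1) → K} (hv : NoNonposCombination K v)
    (h₀ : ∀ i, v i 0 = 0) : NoNonposCombination K fun i ↦ Fin.tail (v i) := by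
  refine fun a ha hle ↦ hv a ha fun k ↦ ?_
  cases k using Fin.cases with
  | zero => simp [Finset.sum_apply, h₀]
  | succ k => simpa [Finset.sum_apply, Fin.tail] using hle k

end NoNonposCombination

namespace FourierMotzkin

variable [DecidableEq ι] {n : ℕ} (v : ι → Fin (n + 1) → K)

abbrev Index := {i // v i 0 = 0} ⊕ {pq : ι × ι // 0 < v pq.1 0 ∧ v pq.2 0 < 0}

def coeff : Index v → ι → K
  | .inl z => Pi.single z.1 1
  | .inr pq => (-v pq.1.2 0) • Pi.single pq.1.1 1 + v pq.1.1 0 • Pi.single pq.1.2 1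

theorem coeff_nonneg [IsStrictOrderedRing K] (j : Index v) : 0 ≤ coeff v j := by
  rcases j with z | ⟨pq, hp, hq⟩
  · exact Pi.single_nonneg.2 zero_le_one
  · exact add_nonneg (smul_nonneg (neg_nonneg.2 hq.le) (Pi.single_nonneg.2 zero_le_one))
      (smul_nonneg hp.le (Pi.single_nonneg.2 zero_le_one))

theorem coeff_ne_zero [IsStrictOrderedRing K] (j : Index v) : coeff v j ≠ 0 := by
  rcases j with z | ⟨⟨p, q⟩, hp, hq⟩
  · simp [coeff]
  · have hqp : q ≠ p := fun h ↦ (hp.trans (h ▸ hq)).false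
    refine Function.ne_iff.2 ⟨p, ?_⟩
    simpa [coeff, hqp] using hq.ne

variable [Fintype ι]

def eliminate (j : Index v) : Fin n → K := Fin.tail (∑ i, coeff v j i • v i)

theorem sum_coeff_smul_inl (z : {i // v i 0 = 0}) :
    ∑ i, coeff v (.inl z) i • v i = v z := by
  simp [coeff]

theorem sum_coeff_smul_inr (pq : {pq : ι × ι // 0 < v pq.1 0 ∧ v pq.2 0 < 0}) :
    ∑ i, coeff v (.inr pq) i • v i = (-v pq.1.2 0) • v pq.1.1 + v pq.1.1 0 • v pq.1.2 := by
  simp [coeff, add_smul, sum_add_distrib, mul_smul, ← Finset.smul_sum]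

theorem sum_coeff_smul_apply_zero (j : Index v) : (∑ i, coeff v j i • v i) 0 = 0 := by
  rcases j with z | pq
  · rw [sum_coeff_smul_inl]
    exact z.2
  · rw [sum_coeff_smul_inr]
    simp only [Pi.add_apply, Pi.smul_apply, smul_eq_mul]
    ring

variable {v}

theorem noNonposCombination_eliminate [IsStrictOrderedRing K] (hv : NoNonposCombination K v) :
    NoNonposCombination K (eliminate v) :=
  (hv.sum_smul (coeff_nonneg v) (coeff_ne_zero v)).tail (sum_coeff_smul_apply_zero v)

theorem exists_cons_dotProduct_pos [IsStrictOrderedRing K] {w : Fin n → K}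
    (hw : ∀ j, 0 < w ⬝ᵥ eliminate v j) : ∃ t, ∀ i, 0 < vecCons t w ⬝ᵥ v i := by
  set d : ι → K := fun i ↦ w ⬝ᵥ Fin.tail (v i)
  have hz : ∀ i, v i 0 = 0 → 0 < d i := fun i h ↦ by
    simpa [eliminate, sum_coeff_smul_inl] using hw (.inl ⟨i, h⟩)
  have hpq : ∀ p q, 0 < v p 0 → v q 0 < 0 → -d p / v p 0 < d q / -v q 0 := fun p q hp hq ↦ by
    have := hw (.inr ⟨(p, q), hp, hq⟩)
    rw [eliminate, sum_coeff_smul_inr] at this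
    change 0 < w ⬝ᵥ ((-v q 0) • Fin.tail (v p) + v p 0 • Fin.tail (v q)) at this
    simp only [dotProduct_add, dotProduct_smul, smul_eq_mul] at this
    rw [div_lt_div_iff₀ hp (neg_pos.2 hq)]
    linarith
  obtain ⟨t, hlo, hhi⟩ := Finset.exists_between'
    ((univ.filter (0 < v · 0)).image fun p ↦ -d p / v p 0)
    ((univ.filter (v · 0 < 0)).image fun q ↦ d q / -v q 0)
    (by simpa using fun p hp q hq ↦ hpq p q hp hq)
  refine ⟨t, fun i ↦ ?_⟩
  have hdot : vecCons t w ⬝ᵥ v i = t * v i 0 + d i := cons_dotProduct _ _ _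
  rcases lt_trichotomy (v i 0) 0 with h | h | h
  · have := hhi _ (mem_image_of_mem _ (mem_filter.2 ⟨mem_univ _, h⟩))
    rw [lt_div_iff₀ (neg_pos.2 h)] at this
    linarith
  · simp [hdot, h, hz i h]
  · have := hlo _ (mem_image_of_mem _ (mem_filter.2 ⟨mem_univ _, h⟩))
    rw [div_lt_iff₀ h] at this
    linarith

end FourierMotzkin

namespace NoNonposCombination

variable [IsStrictOrderedRing K]

theorem exists_dotProduct_pos {n : ℕ} [Fintype ι] {v : ι → Fin n → K}
    (hv : NoNonposCombination K v) : ∃ w, ∀ i, 0 < w ⬝ᵥ v i := by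
  classical
  induction n generalizing ι with
  | zero =>
    refine ⟨0, fun i ↦ ?_⟩
    have := congrFun (hv (Pi.single i 1) (Pi.single_nonneg.2 zero_le_one) fun k ↦ k.elim0) i
    simp at this
  | succ n ih =>
    obtain ⟨w, hw⟩ := ih (FourierMotzkin.noNonposCombination_eliminate hv)
    obtain ⟨t, ht⟩ := FourierMotzkin.exists_cons_dotProduct_pos hw
    exact ⟨_, ht⟩

theorem sum_elim_single {n : ℕ} [Fintype ι] {v : ι → Fin n → K}
    (hv : NoNonposCombination K v) :
    NoNonposCombination K (Sum.elim v fun k ↦ Pi.single k 1) := by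
  intro a ha hle
  rw [Fintype.sum_sum_type] at hle
  simp only [Sum.elim_inl, Sum.elim_inr] at hle
  rw [← pi_eq_sum_univ' fun k ↦ a (.inr k)] at hle
  have hb : 0 ≤ fun k ↦ a (.inr k) := fun k ↦ ha _
  have ha₁ := congrFun (hv _ (fun i ↦ ha _) ((le_add_of_nonneg_right hb).trans hle))
  simp only [ha₁, Pi.zero_apply, zero_smul, sum_const_zero, zero_add] at hle
  have ha₂ := le_antisymm hle hb
  ext (i | k)
  · exact ha₁ i
  · exact congrFun ha₂ k

theorem exists_pos_dotProduct_pos {n : ℕ} [Fintype ι] {v : ι → Fin n → K}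
    (hv : NoNonposCombination K v) : ∃ w, (∀ k, 0 < w k) ∧ ∀ i, 0 < w ⬝ᵥ v i := by
  classical
  obtain ⟨w, hw⟩ := hv.sum_elim_single.exists_dotProduct_pos
  exact ⟨w, fun k ↦ by simpa using hw (.inr k), fun i ↦ hw (.inl i)⟩

end NoNonposCombination

end Gordan

theorem Rat.exists_pos_nat_mul_eq_natCast {ι : Type*} [Fintype ι] {q : ι → ℚ} (hq : 0 ≤ q) :
    ∃ c : ℕ, 0 < c ∧ ∀ i, ∃ N : ℕ, (N : ℚ) = c * q i := by
  refine ⟨∏ i, (q i).den, prod_pos fun i _ ↦ (q i).pos, fun i ↦ ?_⟩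
  obtain ⟨r, hr⟩ := dvd_prod_of_mem (fun i ↦ (q i).den) (mem_univ i)
  refine ⟨r * (q i).num.toNat, ?_⟩
  have hnum : ((q i).num.toNat : ℚ) = (q i).num := by
    exact_mod_cast Int.toNat_of_nonneg (Rat.num_nonneg.2 (hq i))
  rw [hr, Nat.cast_mul, Nat.cast_mul, hnum, ← Rat.den_mul_eq_num]
  ring

theorem MonomialOrder.eq_zero_of_sum_nsmul_le {σ ι : Type*} [Fintype ι] (m : MonomialOrder σ)
    {u t : ι → σ →₀ ℕ} (hut : ∀ i, u i ≺[m] t i) {a : ι → ℕ}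
    (hle : ∑ i, a i • t i ≤ ∑ i, a i • u i) : a = 0 := by
  by_contra ha
  obtain ⟨i, hi⟩ := Function.ne_iff.1 ha
  have hlt : m.toSyn (∑ i, a i • u i) < m.toSyn (∑ i, a i • t i) := by
    simp only [map_sum, map_nsmul]
    exact sum_lt_sum (fun i _ ↦ nsmul_le_nsmul_right (hut i).le _)
      ⟨i, mem_univ i, nsmul_lt_nsmul_right hi (hut i)⟩
  exact (m.toSyn_monotone hle).not_gt hlt

theorem MonomialOrder.noNonposCombination_sub {σ ι : Type*} [Fintype ι] (m : MonomialOrder σ)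
    {u t : ι → σ →₀ ℕ} (hut : ∀ i, u i ≺[m] t i) :
    NoNonposCombination ℚ fun i (k : σ) ↦ (t i k : ℚ) - u i k := by
  intro a ha hle
  obtain ⟨c, hc, hN⟩ := Rat.exists_pos_nat_mul_eq_natCast ha
  choose N hN using hN
  have hN₀ : N = 0 := m.eq_zero_of_sum_nsmul_le hut fun k ↦ by
    have hNk : ∑ i, (N i : ℚ) * t i k - ∑ i, (N i : ℚ) * u i k ≤ 0 := by
      have := mul_nonpos_of_nonneg_of_nonpos (Nat.cast_nonneg (α := ℚ) c) (hle k)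
      simpa only [← sum_sub_distrib, hN, Finset.sum_apply, Pi.smul_apply, smul_eq_mul, mul_sum,
        mul_sub, mul_assoc] using this
    simp only [Finsupp.finsetSum_apply, Finsupp.smul_apply, smul_eq_mul]
    exact_mod_cast sub_nonpos.1 hNk
  funext i
  simpa [hN₀, hc.ne'] using (hN i).symm

/-- Every monomial order can be represented on a finite set of exponent
vectors by a single strictly positive weight vector: `u ≺ t` implies
`w·u < w·t` for `u, t ∈ S`, and consequently for distinct `u, t ∈ S` we have
`u ≺ t` if and only if `w·u < w·t`. -/
theorem monomialOrder_represented_by_weight_vector {n : ℕ}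
    (m : MonomialOrder (Fin n)) (S : Finset (Fin n →₀ ℕ)) :
    ∃ w : Fin n → ℕ, (∀ k, 0 < w k) ∧
      (∀ u ∈ S, ∀ t ∈ S, (u ≺[m] t) → ∑ k, w k * u k < ∑ k, w k * t k) ∧
      (∀ u ∈ S, ∀ t ∈ S, u ≠ t →
        ((u ≺[m] t) ↔ ∑ k, w k * u k < ∑ k, w k * t k)) := by
  obtain ⟨w, hw_pos, hw⟩ := (m.noNonposCombination_sub
    (u := fun p : {p : S × S // (p.1 : Fin n →₀ ℕ) ≺[m] p.2} ↦ p.1.1)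
    (t := fun p ↦ p.1.2) fun p ↦ p.2).exists_pos_dotProduct_pos
  obtain ⟨c, hc, hW⟩ := Rat.exists_pos_nat_mul_eq_natCast fun k ↦ (hw_pos k).le
  choose W hW using hW
  have hW_sum (x : Fin n →₀ ℕ) : ((∑ k, W k * x k : ℕ) : ℚ) = c * w ⬝ᵥ fun k ↦ (x k : ℚ) := by
    simp [hW, dotProduct, mul_sum, mul_assoc]
  have hW_lt : ∀ u ∈ S, ∀ t ∈ S, u ≺[m] t → ∑ k, W k * u k < ∑ k, W k * t k := by
    intro u hu t ht hut
    have hdot : 0 < w ⬝ᵥ (fun k ↦ (t k : ℚ)) - w ⬝ᵥ fun k ↦ (u k : ℚ) :=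
      (hw ⟨(⟨u, hu⟩, ⟨t, ht⟩), hut⟩).trans_eq (dotProduct_sub w (fun k ↦ (t k : ℚ)) _)
    rw [← Nat.cast_lt (α := ℚ), hW_sum, hW_sum]
    nlinarith [(Nat.cast_pos (α := ℚ)).2 hc]
  refine ⟨W, fun k ↦ ?_, hW_lt, fun u hu t ht hne ↦ ⟨hW_lt u hu t ht, fun h ↦ ?_⟩⟩
  · exact_mod_cast (hW k).symm ▸ mul_pos (Nat.cast_pos.2 hc) (hw_pos k)
  · by_contra hut
    exact (hW_lt t ht u hu ((not_lt.1 hut).lt_of_ne (m.toSyn.injective.ne hne.symm))).not_gt h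
end
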